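/- Let σ(u,v) = (4u/(u²+v²+4), 4v/(u²+v²+4), 2(u²+v²)/(u²+v²+4)) be the inverse stereographic projection onto the sphere x² + y² + (z−1)² = 1 and let c = (0,0,1). If p : ℝ³ → ℝ is a polynomial function that is homogeneous of degree n (p(t·x) = tⁿ·p(x) for all t ∈ ℝ, x ∈ ℝ³) and harmonic (∂²p/∂x² + ∂²p/∂y² + ∂²p/∂z² = 0 identically), then the function f(u,v) = p(σ(u,v) − c) satisfies, at every point (u,v) ∈ ℝ²: ∂²f/∂u² + ∂²f/∂v² = −n(n+1)·(4/(u² + v² + 4))²·f(u,v). -/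

import Mathlib

/-!
The chart `F = invStereo3 - (0, 0, 1)` onto the unit sphere is conformal with factor
`λ = 4 / (u² + v² + 4)`, so the flat Laplacian of `p ∘ F` is `λ²` times the Laplace–Beltrami
operator of `p` on the sphere. On the unit sphere the latter equals `Δp - E (E + 1) p`, where
`E = ∑ xᵢ ∂ᵢ` is the Euler operator, and for a harmonic `p` homogeneous of degree `n`
Euler's identity `E p = n p` turns this into `-n (n + 1) p`.
-/

/-- The planar Laplacian `∂²f/∂u² + ∂²f/∂v²` of `f : ℝ × ℝ → ℝ` at a point `q`. -/
noncomputable def lap2 (f : ℝ × ℝ → ℝ) (q : ℝ × ℝ) : ℝ :=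
  deriv (deriv fun u => f (u, q.2)) q.1 + deriv (deriv fun v => f (q.1, v)) q.2

/-- Partial derivative in the `i`-th coordinate of a function on `ℝ³ = Fin 3 → ℝ`. -/
noncomputable def pd (i : Fin 3) (f : (Fin 3 → ℝ) → ℝ) (x : Fin 3 → ℝ) : ℝ :=
  deriv (fun s => f (Function.update x i s)) (x i)

/-- The inverse stereographic projection onto the unit sphere centered at `(0,0,1)`,
as a map into `ℝ³ = Fin 3 → ℝ`. -/
noncomputable def invStereo3 (q : ℝ × ℝ) : Fin 3 → ℝ :=
  ![4 * q.1 / (q.1 ^ 2 + q.2 ^ 2 + 4),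
    4 * q.2 / (q.1 ^ 2 + q.2 ^ 2 + 4),
    2 * (q.1 ^ 2 + q.2 ^ 2) / (q.1 ^ 2 + q.2 ^ 2 + 4)]

namespace MvPolynomial

variable {σ : Type*} [Fintype σ]

theorem hasDerivAt_eval_comp (P : MvPolynomial σ ℝ) {γ : ℝ → σ → ℝ} {γ' : σ → ℝ} {t : ℝ}
    (hγ : HasDerivAt γ γ' t) :
    HasDerivAt (fun a => eval (γ a) P) (∑ k, eval (γ t) (pderiv k P) * γ' k) t := by
  classical
  induction P using MvPolynomial.induction_on with
  | C r => simpa using hasDerivAt_const t r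
  | add P Q hP hQ => simpa [add_mul, Finset.sum_add_distrib] using hP.fun_add hQ
  | mul_X P j hP =>
    simp only [map_mul, eval_X]
    refine (hP.fun_mul (hasDerivAt_pi.1 hγ j)).congr_deriv ?_
    simp only [pderiv_mul, pderiv_X, map_add, map_mul, eval_X, add_mul, Finset.sum_add_distrib,
      Finset.sum_mul]
    simp [Pi.single_apply, mul_right_comm _ (γ t j)]

theorem deriv_deriv_eval_comp (P : MvPolynomial σ ℝ) {γ γ' : ℝ → σ → ℝ} {γ'' : σ → ℝ} {t : ℝ}
    (hγ : ∀ a, HasDerivAt γ (γ' a) a) (hγ' : HasDerivAt γ' γ'' t) :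
    deriv (deriv fun a => eval (γ a) P) t =
      ∑ j, ∑ k, eval (γ t) (pderiv k (pderiv j P)) * γ' t k * γ' t j +
        ∑ j, eval (γ t) (pderiv j P) * γ'' j := by
  have h_deriv : deriv (fun a => eval (γ a) P) = fun a => ∑ j, eval (γ a) (pderiv j P) * γ' a j :=
    _root_.funext fun a => (P.hasDerivAt_eval_comp (hγ a)).deriv
  rw [h_deriv, ← Finset.sum_add_distrib]
  refine (HasDerivAt.fun_sum fun j _ =>
    (hasDerivAt_eval_comp _ (hγ t)).mul (hasDerivAt_pi.1 hγ' j)).deriv.trans ?_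
  simp [Finset.sum_mul]

noncomputable def laplacian (P : MvPolynomial σ ℝ) : MvPolynomial σ ℝ :=
  ∑ i, pderiv i (pderiv i P)

noncomputable def eulerOperator (P : MvPolynomial σ ℝ) : MvPolynomial σ ℝ :=
  ∑ i, X i * pderiv i P

/-- On the unit sphere this is the Laplace–Beltrami operator applied to the restriction of `P`,
because `‖x‖² Δ = E (E + 1) + Δ_S` for the Euler operator `E = ∑ xᵢ ∂ᵢ`. -/
noncomputable def sphericalLaplacian (P : MvPolynomial σ ℝ) : MvPolynomial σ ℝ :=
  laplacian P - eulerOperator (eulerOperator P) - eulerOperator P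

theorem eulerOperator_smul (c : ℝ) (P : MvPolynomial σ ℝ) :
    eulerOperator (c • P) = c • eulerOperator P := by
  simp [eulerOperator, Finset.smul_sum]

theorem eulerOperator_eulerOperator (P : MvPolynomial σ ℝ) :
    eulerOperator (eulerOperator P) =
      ∑ j, ∑ k, X k * X j * pderiv k (pderiv j P) + eulerOperator P := by
  classical
  simp only [eulerOperator, map_sum, pderiv_mul, pderiv_X, Finset.mul_sum, mul_add,
    Finset.sum_add_distrib]
  rw [add_comm, Finset.sum_comm (f := fun x i => X x * (X i * _))]
  refine congrArg₂ (· + ·) (by simp only [mul_assoc]) (Finset.sum_congr rfl fun i _ => ?_)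
  rw [Finset.sum_eq_single i (fun j _ hj => by simp [Pi.single_eq_of_ne hj]) (by simp)]
  simp

theorem eval_sphericalLaplacian (P : MvPolynomial σ ℝ) (x : σ → ℝ) :
    eval x (sphericalLaplacian P) =
      ∑ j, eval x (pderiv j (pderiv j P)) -
        ∑ j, ∑ k, x k * x j * eval x (pderiv k (pderiv j P)) -
        2 * ∑ j, x j * eval x (pderiv j P) := by
  rw [sphericalLaplacian, eulerOperator_eulerOperator]
  simp only [laplacian, eulerOperator, map_sub, map_add, map_sum, map_mul, eval_X]
  ring

theorem eulerOperator_eq_of_eval_smul {P : MvPolynomial σ ℝ} {n : ℕ}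
    (h : ∀ (t : ℝ) (x : σ → ℝ), eval (t • x) P = t ^ n * eval x P) :
    eulerOperator P = (n : ℝ) • P := by
  refine MvPolynomial.funext fun x => ?_
  have h_line : HasDerivAt (fun t : ℝ => t • x) x 1 := by
    simpa using (hasDerivAt_id (1 : ℝ)).smul_const x
  have h_pow : HasDerivAt (fun t : ℝ => eval (t • x) P) (n * eval x P) 1 := by
    simp_rw [h]
    simpa using (hasDerivAt_pow n (1 : ℝ)).mul_const (eval x P)
  have h_chain := P.hasDerivAt_eval_comp h_line
  simp only [one_smul] at h_chain
  simpa [eulerOperator, mul_comm] using h_chain.unique h_pow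

theorem sphericalLaplacian_eq_of_harmonic {P : MvPolynomial σ ℝ} {n : ℕ}
    (h_euler : eulerOperator P = (n : ℝ) • P) (h_harm : laplacian P = 0) :
    sphericalLaplacian P = -((n : ℝ) * (n + 1)) • P := by
  rw [sphericalLaplacian, h_harm, h_euler, eulerOperator_smul, h_euler]
  module

end MvPolynomial

open MvPolynomial

section

variable {E : Type*} [NormedAddCommGroup E] [NormedSpace ℝ E]

theorem hasDerivAt_inv_sq_add_smul (α β : E) {c a : ℝ} (hs : a ^ 2 + c ≠ 0) :
    HasDerivAt (fun a => (a ^ 2 + c)⁻¹ • (a • α + β))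
      (((a ^ 2 + c) ^ 2)⁻¹ • ((c - a ^ 2) • α - (2 * a) • β)) a := by
  have h_sq : HasDerivAt (fun a => a ^ 2 + c) (2 * a) a := by
    simpa using (hasDerivAt_pow 2 a).add_const c
  refine ((h_sq.fun_inv hs).smul ((hasDerivAt_id' a).smul_const α |>.add_const β)).congr_deriv ?_
  match_scalars <;> field_simp
  ring

theorem hasDerivAt_inv_sq_add_sq_smul (α β : E) {c a : ℝ} (hs : a ^ 2 + c ≠ 0) :
    HasDerivAt (fun a => ((a ^ 2 + c) ^ 2)⁻¹ • ((c - a ^ 2) • α - (2 * a) • β))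
      (((a ^ 2 + c) ^ 3)⁻¹ • ((2 * a ^ 3 - 6 * a * c) • α + (6 * a ^ 2 - 2 * c) • β)) a := by
  have h_sq : HasDerivAt (fun a => (a ^ 2 + c) ^ 2) (2 * (a ^ 2 + c) * (2 * a)) a := by
    simpa using ((hasDerivAt_pow 2 a).add_const c).fun_pow 2
  have h_α : HasDerivAt (fun a => c - a ^ 2) (-(2 * a)) a := by
    simpa using (hasDerivAt_pow 2 a).const_sub c
  have h_β : HasDerivAt (fun a : ℝ => 2 * a) 2 a := by
    simpa using (hasDerivAt_id a).const_mul 2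
  refine ((h_sq.fun_inv (pow_ne_zero 2 hs)).smul
    ((h_α.smul_const α).fun_sub (h_β.smul_const β))).congr_deriv ?_
  match_scalars <;> field_simp <;> ring

end

theorem pd_eval (P : MvPolynomial (Fin 3) ℝ) (i : Fin 3) :
    pd i (fun y => eval y P) = fun y => eval y (pderiv i P) := by
  funext x
  rw [pd, (P.hasDerivAt_eval_comp (hasDerivAt_update x i (x i))).deriv]
  simp [Pi.single_apply]

theorem invStereo3_sub_eq_of_fst (a v : ℝ) :
    invStereo3 (a, v) - ![0, 0, 1] =
      (a ^ 2 + (v ^ 2 + 4))⁻¹ • (a • ![4, 0, 0] + ![0, 4 * v, -8]) + ![0, 0, 1] := by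
  have : a ^ 2 + v ^ 2 + 4 ≠ 0 := by positivity
  ext k
  fin_cases k <;> simp [invStereo3] <;> field_simp <;> ring

theorem invStereo3_sub_eq_of_snd (u b : ℝ) :
    invStereo3 (u, b) - ![0, 0, 1] =
      (b ^ 2 + (u ^ 2 + 4))⁻¹ • (b • ![0, 4, 0] + ![4 * u, 0, -8]) + ![0, 0, 1] := by
  have : u ^ 2 + b ^ 2 + 4 ≠ 0 := by positivity
  ext k
  fin_cases k <;> simp [invStereo3] <;> field_simp <;> ring

theorem lap2_eval_comp_invStereo3 (P : MvPolynomial (Fin 3) ℝ) (q : ℝ × ℝ) :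
    lap2 (fun q' => eval (invStereo3 q' - ![0, 0, 1]) P) q =
      (4 / (q.1 ^ 2 + q.2 ^ 2 + 4)) ^ 2 *
        eval (invStereo3 q - ![0, 0, 1]) (sphericalLaplacian P) := by
  obtain ⟨u, v⟩ := q
  have hs : ∀ a c : ℝ, a ^ 2 + (c ^ 2 + 4) ≠ 0 := fun a c => by positivity
  have hs₀ : u ^ 2 + v ^ 2 + 4 ≠ 0 := by positivity
  simp only [lap2, invStereo3_sub_eq_of_fst _ v, invStereo3_sub_eq_of_snd u]
  rw [deriv_deriv_eval_comp P (fun a => (hasDerivAt_inv_sq_add_smul _ _ (hs a v)).add_const _)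
      (hasDerivAt_inv_sq_add_sq_smul _ _ (hs u v)),
    deriv_deriv_eval_comp P (fun b => (hasDerivAt_inv_sq_add_smul _ _ (hs b u)).add_const _)
      (hasDerivAt_inv_sq_add_sq_smul _ _ (hs v u)),
    ← invStereo3_sub_eq_of_fst, ← invStereo3_sub_eq_of_snd, eval_sphericalLaplacian]
  generalize hx : invStereo3 (u, v) - ![0, 0, 1] = x
  have hx0 : x 0 = 4 * u / (u ^ 2 + v ^ 2 + 4) := by simp [← hx, invStereo3]
  have hx1 : x 1 = 4 * v / (u ^ 2 + v ^ 2 + 4) := by simp [← hx, invStereo3]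
  have hx2 : x 2 = (u ^ 2 + v ^ 2 - 4) / (u ^ 2 + v ^ 2 + 4) := by
    simp [← hx, invStereo3]
    field_simp
    ring
  simp only [Fin.sum_univ_three, Pi.add_apply, Pi.sub_apply, Pi.smul_apply, smul_eq_mul,
    Matrix.cons_val_zero, Matrix.cons_val_one, Matrix.cons_val_two, Matrix.head_cons,
    Matrix.tail_cons, hx0, hx1, hx2]
  rw [show u ^ 2 + (v ^ 2 + 4) = u ^ 2 + v ^ 2 + 4 by ring,
    show v ^ 2 + (u ^ 2 + 4) = u ^ 2 + v ^ 2 + 4 by ring]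
  field_simp
  ring

theorem stmt11 (n : ℕ) (p : (Fin 3 → ℝ) → ℝ)
    (h_poly : ∃ P : MvPolynomial (Fin 3) ℝ, ∀ x, p x = MvPolynomial.eval x P)
    (h_hom : ∀ (t : ℝ) (x : Fin 3 → ℝ), p (t • x) = t ^ n * p x)
    (h_harm : ∀ x : Fin 3 → ℝ,
      pd 0 (pd 0 p) x + pd 1 (pd 1 p) x + pd 2 (pd 2 p) x = 0) :
    ∀ q : ℝ × ℝ,
      lap2 (fun q' => p (invStereo3 q' - ![0, 0, 1])) q =
        -((n : ℝ) * (n + 1)) * (4 / (q.1 ^ 2 + q.2 ^ 2 + 4)) ^ 2 *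
          p (invStereo3 q - ![0, 0, 1]) := by
  obtain ⟨P, hp⟩ := h_poly
  obtain rfl : p = fun x => eval x P := funext hp
  have h_euler : eulerOperator P = (n : ℝ) • P := eulerOperator_eq_of_eval_smul h_hom
  have h_lap : laplacian P = 0 := MvPolynomial.funext fun x => by
    simpa [laplacian, Fin.sum_univ_three, pd_eval] using h_harm x
  intro q
  rw [lap2_eval_comp_invStereo3, sphericalLaplacian_eq_of_harmonic h_euler h_lap, smul_eval]
  ring
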